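/- arXiv:2603.00914 — 3 statements merged into one kernel-verified Lean document; each statement's English description precedes it below -/
import Mathlib

section
/- Let k ≥ 4 and suppose L_1 < r and r ≤ L_i for every i ∈ {2,…,k}. Then the model graph (G_k)_{r,L} has exactly k² + k − 2 vertices, exactly 2k² − 4k + 2 edges, and is connected; consequently e((G_k)_{r,L}) − v((G_k)_{r,L}) + c((G_k)_{r,L}) = k² − 5k + 5. -/
/-- A pair `(x,y)` is a vertex of the model graph `(G_k)_{r,L}`. -/
def IsModelVertex (k : ℕ) (r : ℝ) (L : ℕ → ℝ) (p : ℕ × ℕ) : Prop :=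
  p.1 ≤ k ∧ p.2 ≤ k ∧ p.1 ≠ p.2 ∧ r ≤ L p.1 + L p.2

/-- The vertex type of the model graph `(G_k)_{r,L}`. -/
def ModelVertex (k : ℕ) (r : ℝ) (L : ℕ → ℝ) : Type :=
  {p : ℕ × ℕ // IsModelVertex k r L p}

/-- The adjacency relation of the model graph `(G_k)_{r,L}`. -/
def ModelAdj (r : ℝ) (L : ℕ → ℝ) (a b : ℕ × ℕ) : Prop :=
  (a.1 = b.1 ∧ ((a.2 = 0 ∧ b.2 ≠ 0) ∨ (a.2 ≠ 0 ∧ b.2 = 0)) ∧ r ≤ L a.1) ∨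
  (a.2 = b.2 ∧ ((a.1 = 0 ∧ b.1 ≠ 0) ∨ (a.1 ≠ 0 ∧ b.1 = 0)) ∧ r ≤ L a.2)

theorem ModelAdj.symm {r : ℝ} {L : ℕ → ℝ} {a b : ℕ × ℕ} (h : ModelAdj r L a b) :
    ModelAdj r L b a := by
  rcases h with ⟨h1, h2, h3⟩ | ⟨h1, h2, h3⟩
  · exact Or.inl ⟨h1.symm, by tauto, h1 ▸ h3⟩
  · exact Or.inr ⟨h1.symm, by tauto, h1 ▸ h3⟩

theorem ModelAdj.irrefl {r : ℝ} {L : ℕ → ℝ} {a : ℕ × ℕ} (h : ModelAdj r L a a) : False := by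
  rcases h with ⟨_, h2, _⟩ | ⟨_, h2, _⟩ <;> tauto

/-- The model graph `(G_k)_{r,L}`. -/
def modelGraph (k : ℕ) (r : ℝ) (L : ℕ → ℝ) : SimpleGraph (ModelVertex k r L) where
  Adj a b := ModelAdj r L a.val b.val
  symm := ⟨fun _ _ h => h.symm⟩
  loopless := ⟨fun _ h => h.irrefl⟩

/-! Under these hypotheses the indices `i ≤ k` with `r ≤ L i` are exactly `2, …, k`, so the
vertices are the pairs of distinct indices in `{0, …, k}` other than `(0, 1)` and `(1, 0)`.
Every edge joins a vertex `(x, y)` with `x, y ≠ 0` to its row hub `(x, 0)` (when `x ≥ 2`) or to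
its column hub `(0, y)` (when `y ≥ 2`), so there are `2 (k - 1)²` edges. The hubs `(x, 0)` and
`(0, y)` with `x ≠ y` are joined through `(x, y)`; as `k ≥ 4` gives at least three indices
`≥ 2`, a detour `(x, 0) — (0, c) — (d, 0) — (0, x)` joins `(x, 0)` to `(0, x)` as well, and every
vertex is a hub or adjacent to one. -/

open Finset

theorem Finset.card_filter_fst_ne_snd_product {α : Type*} [DecidableEq α] (s t : Finset α) :
    #((s ×ˢ t).filter fun p => p.1 ≠ p.2) = #s * #t - #(s ∩ t) := by
  have hsub : (s ∩ t).diag ⊆ s ×ˢ t := fun p hp => by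
    simp only [mem_diag, mem_inter] at hp
    simp [hp.1.1, ← hp.2, hp.1.2]
  have hdiff : (s ×ˢ t).filter (fun p => p.1 ≠ p.2) = s ×ˢ t \ (s ∩ t).diag := by
    ext p
    by_cases h : p.1 = p.2 <;> simp [h]
  rw [hdiff, card_sdiff_of_subset hsub, diag_card, card_product]

def modelVertices (k : ℕ) : Finset (ℕ × ℕ) :=
  (range (k + 1)).offDiag \ {(0, 1), (1, 0)}

theorem mem_modelVertices {k x y : ℕ} :
    (x, y) ∈ modelVertices k ↔ x ≤ k ∧ y ≤ k ∧ x ≠ y ∧ (2 ≤ x ∨ 2 ≤ y) := by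
  simp only [modelVertices, mem_sdiff, mem_offDiag, mem_range, mem_insert, mem_singleton,
    Prod.mk.injEq]
  omega

theorem card_modelVertices {k : ℕ} (hk : 1 ≤ k) : #(modelVertices k) = k ^ 2 + k - 2 := by
  have hsub : {(0, 1), (1, 0)} ⊆ (range (k + 1)).offDiag := by
    simp only [insert_subset_iff, singleton_subset_iff, mem_offDiag, mem_range]
    omega
  rw [modelVertices, card_sdiff_of_subset hsub, offDiag_card, card_range, card_pair (by simp)]
  ring_nf
  omega

def rowEdge (p : ℕ × ℕ) : Sym2 (ℕ × ℕ) := s((p.1, 0), p)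

def colEdge (p : ℕ × ℕ) : Sym2 (ℕ × ℕ) := s((0, p.2), p)

def rowEdgeLabels (k : ℕ) : Finset (ℕ × ℕ) := (Icc 2 k ×ˢ Icc 1 k).filter fun p => p.1 ≠ p.2

def colEdgeLabels (k : ℕ) : Finset (ℕ × ℕ) := (Icc 1 k ×ˢ Icc 2 k).filter fun p => p.1 ≠ p.2

def modelEdges (k : ℕ) : Finset (Sym2 (ℕ × ℕ)) :=
  (rowEdgeLabels k).image rowEdge ∪ (colEdgeLabels k).image colEdge

theorem rowEdge_injective : Function.Injective rowEdge := by
  rintro ⟨a, b⟩ ⟨c, d⟩ h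
  simp only [rowEdge, Sym2.eq_iff, Prod.mk.injEq] at h ⊢
  omega

theorem colEdge_injective : Function.Injective colEdge := by
  rintro ⟨a, b⟩ ⟨c, d⟩ h
  simp only [colEdge, Sym2.eq_iff, Prod.mk.injEq] at h ⊢
  omega

theorem rowEdge_ne_colEdge {p q : ℕ × ℕ} (hp : p.1 ≠ 0) : rowEdge p ≠ colEdge q := by
  simp only [rowEdge, colEdge, ne_eq, Sym2.eq_iff, Prod.ext_iff]
  omega

theorem card_modelEdges {k : ℕ} (hk : 2 ≤ k) : #(modelEdges k) = 2 * k ^ 2 - 4 * k + 2 := by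
  have hdisj : Disjoint ((rowEdgeLabels k).image rowEdge) ((colEdgeLabels k).image colEdge) := by
    simp only [disjoint_left, mem_image, rowEdgeLabels, mem_filter, mem_product, mem_Icc]
    rintro _ ⟨p, hp, rfl⟩ ⟨q, -, hpq⟩
    exact rowEdge_ne_colEdge (by omega) hpq.symm
  have hrow : Icc 2 k ∩ Icc 1 k = Icc 2 k := inter_eq_left.2 (Icc_subset_Icc_left (by norm_num))
  have hcol : Icc 1 k ∩ Icc 2 k = Icc 2 k := inter_eq_right.2 (Icc_subset_Icc_left (by norm_num))
  rw [modelEdges, card_union_of_disjoint hdisj, card_image_of_injective _ rowEdge_injective,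
    card_image_of_injective _ colEdge_injective, rowEdgeLabels, colEdgeLabels,
    card_filter_fst_ne_snd_product, card_filter_fst_ne_snd_product, hrow, hcol,
    Nat.card_Icc, Nat.card_Icc]
  obtain ⟨n, rfl⟩ := Nat.exists_eq_add_of_le' hk
  simp only [Nat.add_sub_cancel, show n + 2 + 1 - 2 = n + 1 by omega, Nat.mul_succ, Nat.succ_mul]
  ring_nf
  omega

section ModelGraph

variable {k : ℕ} {r : ℝ} {L : ℕ → ℝ}

theorem le_apply_iff_two_le (hr : 0 < r) (hL0 : L 0 = 0) (hL1 : L 1 < r)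
    (hrL : ∀ i, 2 ≤ i → i ≤ k → r ≤ L i) {i : ℕ} (hi : i ≤ k) : r ≤ L i ↔ 2 ≤ i := by
  refine ⟨fun h => ?_, fun h => hrL i h hi⟩
  by_contra hi2
  interval_cases i <;> linarith

theorem le_apply_add_apply_iff (hL0 : L 0 = 0) (hLpos : ∀ i, 1 ≤ i → i ≤ k → 0 < L i)
    (hL1 : L 1 < r) (hrL : ∀ i, 2 ≤ i → i ≤ k → r ≤ L i) {x y : ℕ} (hx : x ≤ k) (hy : y ≤ k)
    (hxy : x ≠ y) : r ≤ L x + L y ↔ 2 ≤ x ∨ 2 ≤ y := by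
  have hnonneg : ∀ i ≤ k, 0 ≤ L i := fun i hi => by
    rcases Nat.eq_zero_or_pos i with rfl | hi0
    · exact hL0.ge
    · exact (hLpos i hi0 hi).le
  constructor
  · intro h
    by_contra! hsmall
    obtain ⟨rfl, rfl⟩ | ⟨rfl, rfl⟩ : (x = 0 ∧ y = 1) ∨ (x = 1 ∧ y = 0) := by omega
    all_goals linarith
  · rintro (h | h)
    · linarith [hrL x h hx, hnonneg y hy]
    · linarith [hrL y h hy, hnonneg x hx]

theorem isModelVertex_iff
    (hpair : ∀ x y, x ≤ k → y ≤ k → x ≠ y → (r ≤ L x + L y ↔ 2 ≤ x ∨ 2 ≤ y)) {x y : ℕ} :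
    IsModelVertex k r L (x, y) ↔ x ≤ k ∧ y ≤ k ∧ x ≠ y ∧ (2 ≤ x ∨ 2 ≤ y) :=
  and_congr_right fun hx => and_congr_right fun hy => and_congr_right fun hxy =>
    hpair x y hx hy hxy

theorem card_modelVertex (hk : 1 ≤ k)
    (hpair : ∀ x y, x ≤ k → y ≤ k → x ≠ y → (r ≤ L x + L y ↔ 2 ≤ x ∨ 2 ≤ y)) :
    Nat.card (ModelVertex k r L) = k ^ 2 + k - 2 := by
  rw [ModelVertex, Nat.subtype_card (modelVertices k)
    fun _ => by rw [mem_modelVertices, isModelVertex_iff hpair], card_modelVertices hk]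

theorem mem_modelEdges_of_modelAdj (hstrong : ∀ i ≤ k, r ≤ L i ↔ 2 ≤ i) {a b : ℕ × ℕ}
    (ha : IsModelVertex k r L a) (hb : IsModelVertex k r L b) (h : ModelAdj r L a b) :
    s(a, b) ∈ modelEdges k := by
  obtain ⟨x, y⟩ := a
  obtain ⟨x', y'⟩ := b
  obtain ⟨hx, hy, hxy, -⟩ := ha
  obtain ⟨hx', hy', hxy', -⟩ := hb
  simp only [modelEdges, mem_union, mem_image, rowEdgeLabels, colEdgeLabels, mem_filter,
    mem_product, mem_Icc]
  rcases h with ⟨rfl, h0, hL⟩ | ⟨rfl, h0, hL⟩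
  · have hx2 := (hstrong _ hx).1 hL
    left
    rcases h0 with ⟨rfl, h0⟩ | ⟨h0, rfl⟩
    · exact ⟨(x, y'), by simp only at *; omega, rfl⟩
    · exact ⟨(x, y), by simp only at *; omega, Sym2.eq_swap⟩
  · have hy2 := (hstrong _ hy).1 hL
    right
    rcases h0 with ⟨rfl, h0⟩ | ⟨h0, rfl⟩
    · exact ⟨(x', y), by simp only at *; omega, rfl⟩
    · exact ⟨(x, y), by simp only at *; omega, Sym2.eq_swap⟩

theorem image_val_edgeSet_modelGraph (hstrong : ∀ i ≤ k, r ≤ L i ↔ 2 ≤ i)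
    (hpair : ∀ x y, x ≤ k → y ≤ k → x ≠ y → (r ≤ L x + L y ↔ 2 ≤ x ∨ 2 ≤ y)) :
    Sym2.map Subtype.val '' (modelGraph k r L).edgeSet = modelEdges k := by
  ext e
  constructor
  · rintro ⟨e, he, rfl⟩
    induction e using Sym2.ind with
    | h u v => exact mem_modelEdges_of_modelAdj hstrong u.2 v.2 he
  · simp only [modelEdges, coe_union, coe_image, Set.mem_union, Set.mem_image, mem_coe,
      rowEdgeLabels, colEdgeLabels, mem_filter, mem_product, mem_Icc]
    rintro (⟨⟨x, y⟩, hp, rfl⟩ | ⟨⟨x, y⟩, hp, rfl⟩) <;> simp only at hp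
    · refine ⟨s(⟨(x, 0), (isModelVertex_iff hpair).2 (by omega)⟩,
        ⟨(x, y), (isModelVertex_iff hpair).2 (by omega)⟩), ?_, rfl⟩
      exact Or.inl ⟨rfl, Or.inl ⟨rfl, by dsimp only; omega⟩, (hstrong x (by omega)).2 (by omega)⟩
    · refine ⟨s(⟨(0, y), (isModelVertex_iff hpair).2 (by omega)⟩,
        ⟨(x, y), (isModelVertex_iff hpair).2 (by omega)⟩), ?_, rfl⟩
      exact Or.inr ⟨rfl, Or.inl ⟨rfl, by dsimp only; omega⟩, (hstrong y (by omega)).2 (by omega)⟩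

theorem card_edgeSet_modelGraph (hk : 2 ≤ k) (hstrong : ∀ i ≤ k, r ≤ L i ↔ 2 ≤ i)
    (hpair : ∀ x y, x ≤ k → y ≤ k → x ≠ y → (r ≤ L x + L y ↔ 2 ≤ x ∨ 2 ≤ y)) :
    Nat.card (modelGraph k r L).edgeSet = 2 * k ^ 2 - 4 * k + 2 :=
  calc Nat.card (modelGraph k r L).edgeSet
      = Nat.card (Sym2.map Subtype.val '' (modelGraph k r L).edgeSet) :=
        (Nat.card_image_of_injective (Sym2.map.injective Subtype.val_injective) _).symm
    _ = 2 * k ^ 2 - 4 * k + 2 := by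
      rw [image_val_edgeSet_modelGraph hstrong hpair, coe_sort_coe, Nat.card_eq_finsetCard,
        card_modelEdges hk]

theorem modelGraph_adj_row {x y : ℕ} (hx : r ≤ L x) (hy : y ≠ 0)
    (h₀ : IsModelVertex k r L (x, 0)) (h : IsModelVertex k r L (x, y)) :
    (modelGraph k r L).Adj ⟨(x, 0), h₀⟩ ⟨(x, y), h⟩ :=
  Or.inl ⟨rfl, Or.inl ⟨rfl, hy⟩, hx⟩

theorem modelGraph_adj_col {x y : ℕ} (hy : r ≤ L y) (hx : x ≠ 0)
    (h₀ : IsModelVertex k r L (0, y)) (h : IsModelVertex k r L (x, y)) :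
    (modelGraph k r L).Adj ⟨(0, y), h₀⟩ ⟨(x, y), h⟩ :=
  Or.inr ⟨rfl, Or.inl ⟨rfl, hx⟩, hy⟩

theorem modelGraph_reachable_row_col {x y : ℕ} (hx : r ≤ L x) (hy : r ≤ L y) (hx₀ : x ≠ 0)
    (hy₀ : y ≠ 0) (h₁ : IsModelVertex k r L (x, 0)) (h₂ : IsModelVertex k r L (0, y))
    (h : IsModelVertex k r L (x, y)) :
    (modelGraph k r L).Reachable ⟨(x, 0), h₁⟩ ⟨(0, y), h₂⟩ :=
  (modelGraph_adj_row hx hy₀ h₁ h).reachable.trans (modelGraph_adj_col hy hx₀ h₂ h).reachable.symm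

theorem modelGraph_reachable_row_col_of_four_le (hk : 4 ≤ k)
    (hstrong : ∀ i ≤ k, r ≤ L i ↔ 2 ≤ i)
    (hpair : ∀ x y, x ≤ k → y ≤ k → x ≠ y → (r ≤ L x + L y ↔ 2 ≤ x ∨ 2 ≤ y)) {x y : ℕ}
    (hx : 2 ≤ x) (hxk : x ≤ k) (hy : 2 ≤ y) (hyk : y ≤ k) (h₁ : IsModelVertex k r L (x, 0))
    (h₂ : IsModelVertex k r L (0, y)) :
    (modelGraph k r L).Reachable ⟨(x, 0), h₁⟩ ⟨(0, y), h₂⟩ := by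
  have hdistinct {x y : ℕ} (h : 2 ≤ x ∧ x ≤ k ∧ 2 ≤ y ∧ y ≤ k ∧ x ≠ y)
      (h₁ : IsModelVertex k r L (x, 0)) (h₂ : IsModelVertex k r L (0, y)) :
      (modelGraph k r L).Reachable ⟨(x, 0), h₁⟩ ⟨(0, y), h₂⟩ :=
    modelGraph_reachable_row_col ((hstrong x h.2.1).2 h.1) ((hstrong y h.2.2.2.1).2 h.2.2.1)
      (by omega) (by omega) h₁ h₂ ((isModelVertex_iff hpair).2 (by omega))
  rcases ne_or_eq x y with hxy | rfl
  · exact hdistinct (by omega) h₁ h₂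
  obtain ⟨c, d, hcd⟩ : ∃ c d, 2 ≤ c ∧ c ≤ k ∧ 2 ≤ d ∧ d ≤ k ∧ c ≠ x ∧ d ≠ x ∧ c ≠ d := by
    rcases (by omega : x = 2 ∨ x = 3 ∨ 4 ≤ x) with h | h | h
    exacts [⟨3, 4, by omega⟩, ⟨2, 4, by omega⟩, ⟨2, 3, by omega⟩]
  have hc : IsModelVertex k r L (0, c) := (isModelVertex_iff hpair).2 (by omega)
  have hd : IsModelVertex k r L (d, 0) := (isModelVertex_iff hpair).2 (by omega)
  exact ((hdistinct (by omega) h₁ hc).trans (hdistinct (by omega) hd hc).symm).trans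
    (hdistinct (by omega) hd h₂)

theorem modelGraph_connected (hk : 4 ≤ k) (hstrong : ∀ i ≤ k, r ≤ L i ↔ 2 ≤ i)
    (hpair : ∀ x y, x ≤ k → y ≤ k → x ≠ y → (r ≤ L x + L y ↔ 2 ≤ x ∨ 2 ≤ y)) :
    (modelGraph k r L).Connected := by
  let root : ModelVertex k r L := ⟨(2, 0), (isModelVertex_iff hpair).2 (by omega)⟩
  have hcol {y : ℕ} (hy : 2 ≤ y) (hyk : y ≤ k) (h : IsModelVertex k r L (0, y)) :
      (modelGraph k r L).Reachable root ⟨(0, y), h⟩ :=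
    modelGraph_reachable_row_col_of_four_le hk hstrong hpair le_rfl (by omega) hy hyk _ h
  have hrow {x : ℕ} (hx : 2 ≤ x) (hxk : x ≤ k) (h : IsModelVertex k r L (x, 0)) :
      (modelGraph k r L).Reachable root ⟨(x, 0), h⟩ :=
    (hcol le_rfl (by omega) ((isModelVertex_iff hpair).2 (by omega))).trans
      (modelGraph_reachable_row_col_of_four_le hk hstrong hpair hx hxk le_rfl (by omega) h _).symm
  refine SimpleGraph.connected_iff_exists_forall_reachable _ |>.2 ⟨root, ?_⟩
  rintro ⟨⟨x, y⟩, h⟩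
  obtain ⟨hx, hy, hxy, h2⟩ := (isModelVertex_iff hpair).1 h
  by_cases hy₀ : y = 0
  · subst hy₀
    exact hrow (by omega) hx h
  by_cases hx₀ : x = 0
  · subst hx₀
    exact hcol (by omega) hy h
  rcases h2 with hx2 | hy2
  · exact (hrow hx2 hx ((isModelVertex_iff hpair).2 (by omega))).trans
      (modelGraph_adj_row ((hstrong x hx).2 hx2) hy₀ _ h).reachable
  · exact (hcol hy2 hy ((isModelVertex_iff hpair).2 (by omega))).trans
      (modelGraph_adj_col ((hstrong y hy).2 hy2) hx₀ _ h).reachable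

end ModelGraph

/-- if `4 ≤ k`, `L 1 < r` and `r ≤ L i` for all `i ∈ {2,…,k}`, then
`(G_k)_{r,L}` has `k² + k − 2` vertices, `2k² − 4k + 2` edges, is connected, and
`e − v + c = k² − 5k + 5`. -/
theorem model_counts_L1_small (k : ℕ) (hk : 4 ≤ k) (r : ℝ) (hr : 0 < r) (L : ℕ → ℝ)
    (hL0 : L 0 = 0) (hLpos : ∀ i, 1 ≤ i → i ≤ k → 0 < L i)
    (hL1 : L 1 < r) (hrL : ∀ i, 2 ≤ i → i ≤ k → r ≤ L i) :
    Nat.card (ModelVertex k r L) = k ^ 2 + k - 2 ∧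
    Nat.card (modelGraph k r L).edgeSet = 2 * k ^ 2 - 4 * k + 2 ∧
    (modelGraph k r L).Connected ∧
    (Nat.card (modelGraph k r L).edgeSet : ℤ) - (Nat.card (ModelVertex k r L) : ℤ)
      + (Nat.card (modelGraph k r L).ConnectedComponent : ℤ)
      = (k : ℤ) ^ 2 - 5 * (k : ℤ) + 5 := by
  have hstrong : ∀ i ≤ k, r ≤ L i ↔ 2 ≤ i := fun i => le_apply_iff_two_le hr hL0 hL1 hrL
  have hpair : ∀ x y, x ≤ k → y ≤ k → x ≠ y → (r ≤ L x + L y ↔ 2 ≤ x ∨ 2 ≤ y) :=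
    fun x y => le_apply_add_apply_iff hL0 hLpos hL1 hrL
  have hV := card_modelVertex (by omega) hpair
  have hE := card_edgeSet_modelGraph (by omega) hstrong hpair
  have hconn := modelGraph_connected hk hstrong hpair
  have hC : Nat.card (modelGraph k r L).ConnectedComponent = 1 :=
    Nat.card_eq_one_iff_unique.2
      ⟨hconn.preconnected.subsingleton_connectedComponent,
        hconn.nonempty.map (modelGraph k r L).connectedComponentMk⟩
  refine ⟨hV, hE, hconn, ?_⟩
  rw [hV, hE, hC]
  have h4k : 4 * k ≤ 2 * k ^ 2 := by nlinarith
  push_cast [Nat.cast_sub h4k, Nat.cast_sub (by nlinarith : 2 ≤ k ^ 2 + k)]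
  ring
end

section
/- Let k ≥ 4 and suppose r ≤ L_1, L_k < r, and r ≤ L_i for every i ∈ {2,…,k−1}. Then the model graph (G_k)_{r,L} has exactly k² + k − 2 vertices, exactly 2(k−1)² edges, and is connected; consequently e((G_k)_{r,L}) − v((G_k)_{r,L}) + c((G_k)_{r,L}) = k² − 5k + 5. -/
/-
Only `L_0 = 0` and `L_k` are below `r`, and `L_0 + L_k < r`, so the vertices are all off-diagonal
pairs except `(0, k)` and `(k, 0)`. Every edge joins a hub `(x, 0)` or `(0, x)` with `1 ≤ x < k` to
a leaf `(x, y)` resp. `(y, x)` with `y ∈ [1, k] \ {x}`: `2 (k - 1)` hubs of degree `k - 1`. The hubs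
`(x, 0)` and `(0, y)` are joined through the leaf `(x, y)` whenever `x ≠ y`; as `[1, k)` has at
least three elements this links all hubs, and every leaf hangs on a hub.
-/

open Finset

structure LastShort (k : ℕ) (r : ℝ) (L : ℕ → ℝ) : Prop where
  zero : L 0 = 0
  nonneg : ∀ i, i ≤ k → 0 ≤ L i
  lt : L k < r
  le : ∀ i, 1 ≤ i → i < k → r ≤ L i

theorem IsModelVertex.swap {k : ℕ} {r : ℝ} {L : ℕ → ℝ} {p : ℕ × ℕ}
    (h : IsModelVertex k r L p) : IsModelVertex k r L p.swap :=
  ⟨h.2.1, h.1, h.2.2.1.symm, h.2.2.2.trans_eq (add_comm _ _)⟩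

def modelVertexFinset (k : ℕ) : Finset (ℕ × ℕ) :=
  (range (k + 1)).offDiag \ {(0, k), (k, 0)}

theorem mem_modelVertexFinset {k x y : ℕ} :
    (x, y) ∈ modelVertexFinset k ↔
      x ≤ k ∧ y ≤ k ∧ x ≠ y ∧ ¬(x = 0 ∧ y = k) ∧ ¬(x = k ∧ y = 0) := by
  simp only [modelVertexFinset, mem_sdiff, mem_offDiag, mem_range, mem_insert, mem_singleton,
    Prod.mk.injEq]
  omega

theorem card_modelVertexFinset {k : ℕ} (hk : 1 ≤ k) :
    #(modelVertexFinset k) = k ^ 2 + k - 2 := by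
  have hsub : {(0, k), (k, 0)} ⊆ (range (k + 1)).offDiag := by
    intro p hp
    simp only [mem_insert, mem_singleton] at hp
    rcases hp with rfl | rfl <;> simp only [mem_offDiag, mem_range] <;> omega
  have hpair : #({(0, k), (k, 0)} : Finset (ℕ × ℕ)) = 2 :=
    card_pair (by simp only [ne_eq, Prod.mk.injEq]; omega)
  rw [modelVertexFinset, card_sdiff_of_subset hsub, offDiag_card, card_range, hpair]
  have : (k + 1) * (k + 1) - (k + 1) = k ^ 2 + k := by
    rw [Nat.sub_eq_iff_eq_add (by nlinarith)]; ring
  omega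

namespace LastShort

variable {k : ℕ} {r : ℝ} {L : ℕ → ℝ}

theorem ne_of_le (hL : LastShort k r L) {i : ℕ} (hi : r ≤ L i) : i ≠ k := by
  rintro rfl
  exact hi.not_gt hL.lt

theorem isModelVertex_iff_mem (hL : LastShort k r L) {p : ℕ × ℕ} :
    IsModelVertex k r L p ↔ p ∈ modelVertexFinset k := by
  obtain ⟨x, y⟩ := p
  rw [mem_modelVertexFinset]
  constructor
  · rintro ⟨hx, hy, hxy, hr⟩
    refine ⟨hx, hy, hxy, ?_, ?_⟩ <;> rintro ⟨rfl, rfl⟩ <;> linarith [hL.zero, hL.lt]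
  · rintro ⟨hx, hy, hxy, h0k, hk0⟩
    refine ⟨hx, hy, hxy, ?_⟩
    rcases (by omega : (1 ≤ x ∧ x < k) ∨ (1 ≤ y ∧ y < k)) with h | h
    · linarith [hL.le x h.1 h.2, hL.nonneg y hy]
    · linarith [hL.le y h.1 h.2, hL.nonneg x hx]

theorem isModelVertex_iff (hL : LastShort k r L) {x y : ℕ} :
    IsModelVertex k r L (x, y) ↔
      x ≤ k ∧ y ≤ k ∧ x ≠ y ∧ ¬(x = 0 ∧ y = k) ∧ ¬(x = k ∧ y = 0) :=
  hL.isModelVertex_iff_mem.trans mem_modelVertexFinset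

theorem card_modelVertex (hL : LastShort k r L) (hk : 1 ≤ k) :
    Nat.card (ModelVertex k r L) = k ^ 2 + k - 2 := by
  rw [← card_modelVertexFinset hk, ← Nat.card_eq_finsetCard]
  exact Nat.card_congr (Equiv.subtypeEquivRight fun _ => hL.isModelVertex_iff_mem)

end LastShort

-- A sigma type rather than a filtered product, so that `card_sigma` counts it fibre by fibre.
def hubLeaves (k : ℕ) : Finset (Σ _ : ℕ, ℕ) :=
  (Ico 1 k).sigma fun x => (Icc 1 k).erase x

def hubEdge (p : Σ _ : ℕ, ℕ) : Sym2 (ℕ × ℕ) :=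
  s((p.1, 0), (p.1, p.2))

def hubEdges (k : ℕ) : Finset (Sym2 (ℕ × ℕ)) :=
  (hubLeaves k).image hubEdge

def modelEdgeFinset (k : ℕ) : Finset (Sym2 (ℕ × ℕ)) :=
  hubEdges k ∪ (hubEdges k).image (Sym2.map Prod.swap)

theorem mem_hubLeaves {k x y : ℕ} :
    (⟨x, y⟩ : Σ _ : ℕ, ℕ) ∈ hubLeaves k ↔ 1 ≤ x ∧ x < k ∧ 1 ≤ y ∧ y ≤ k ∧ x ≠ y := by
  simp only [hubLeaves, mem_sigma, mem_Ico, mem_erase, mem_Icc]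
  omega

theorem card_hubLeaves (k : ℕ) : #(hubLeaves k) = (k - 1) ^ 2 := by
  rw [hubLeaves, card_sigma, sum_congr rfl fun x hx => card_erase_of_mem ?_]
  · rw [sum_const, Nat.card_Ico, Nat.card_Icc, smul_eq_mul, sq, Nat.add_sub_cancel]
  · simp only [mem_Ico] at hx
    simp only [mem_Icc]
    omega

theorem hubEdge_injOn (k : ℕ) : Set.InjOn hubEdge (hubLeaves k) := by
  rintro ⟨x, y⟩ hp ⟨x', y'⟩ hq h
  rw [mem_coe, mem_hubLeaves] at hp hq
  simp only [hubEdge, Sym2.eq_iff, Prod.mk.injEq] at h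
  rcases h with ⟨⟨rfl, -⟩, -, rfl⟩ | ⟨⟨rfl, h⟩, -⟩
  · rfl
  · omega

theorem card_hubEdges (k : ℕ) : #(hubEdges k) = (k - 1) ^ 2 := by
  rw [hubEdges, card_image_of_injOn (hubEdge_injOn k), card_hubLeaves]

theorem disjoint_hubEdges_image_swap (k : ℕ) :
    Disjoint (hubEdges k) ((hubEdges k).image (Sym2.map Prod.swap)) := by
  simp only [hubEdges, disjoint_left, mem_image, not_exists, not_and]
  rintro _ ⟨⟨x, y⟩, hp, rfl⟩ _ ⟨⟨x', y'⟩, hq, rfl⟩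
  rw [mem_hubLeaves] at hp hq
  simp only [hubEdge, Sym2.map_mk, Prod.swap_prod_mk, Sym2.eq_iff, Prod.mk.injEq]
  omega

theorem card_modelEdgeFinset (k : ℕ) : #(modelEdgeFinset k) = 2 * (k - 1) ^ 2 := by
  rw [modelEdgeFinset, card_union_of_disjoint (disjoint_hubEdges_image_swap k),
    card_image_of_injective _ (Sym2.map.injective Prod.swap_injective), card_hubEdges]
  ring

namespace LastShort

variable {k : ℕ} {r : ℝ} {L : ℕ → ℝ}

theorem hubEdge_mem_hubEdges (hL : LastShort k r L) {x y : ℕ}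
    (hx : IsModelVertex k r L (x, 0)) (hxy : IsModelVertex k r L (x, y)) (hy : y ≠ 0)
    (hr : r ≤ L x) : hubEdge ⟨x, y⟩ ∈ hubEdges k := by
  refine mem_image_of_mem _ (mem_hubLeaves.2 ?_)
  rw [hL.isModelVertex_iff] at hx hxy
  have := hL.ne_of_le hr
  omega

theorem mk_mem_modelEdgeFinset (hL : LastShort k r L) {a b : ℕ × ℕ}
    (ha : IsModelVertex k r L a) (hb : IsModelVertex k r L b) (hab : ModelAdj r L a b) :
    s(a, b) ∈ modelEdgeFinset k := by
  obtain ⟨a₁, a₂⟩ := a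
  obtain ⟨b₁, b₂⟩ := b
  rcases hab with ⟨rfl, ⟨rfl, hb₂⟩ | ⟨ha₂, rfl⟩, hr⟩ | ⟨rfl, ⟨rfl, hb₁⟩ | ⟨ha₁, rfl⟩, hr⟩
  · exact mem_union_left _ (hL.hubEdge_mem_hubEdges ha hb hb₂ hr)
  · rw [Sym2.eq_swap]
    exact mem_union_left _ (hL.hubEdge_mem_hubEdges hb ha ha₂ hr)
  · exact mem_union_right _ (mem_image_of_mem _
      (hL.hubEdge_mem_hubEdges ha.swap hb.swap hb₁ hr))
  · rw [Sym2.eq_swap]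
    exact mem_union_right _ (mem_image_of_mem _
      (hL.hubEdge_mem_hubEdges hb.swap ha.swap ha₁ hr))

theorem image_edgeSet (hL : LastShort k r L) :
    Sym2.map Subtype.val '' (modelGraph k r L).edgeSet = modelEdgeFinset k := by
  apply Set.Subset.antisymm
  · rintro _ ⟨e, he, rfl⟩
    induction e using Sym2.ind with
    | _ a b => exact hL.mk_mem_modelEdgeFinset a.2 b.2 he
  · intro e he
    simp only [modelEdgeFinset, hubEdges, coe_union, coe_image, Set.mem_union, Set.mem_image] at he
    rcases he with ⟨⟨x, y⟩, hp, rfl⟩ | ⟨_, ⟨⟨x, y⟩, hp, rfl⟩, rfl⟩ <;>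
      have hp := mem_hubLeaves.1 hp
    · refine ⟨s(⟨(x, 0), hL.isModelVertex_iff.2 (by omega)⟩,
        ⟨(x, y), hL.isModelVertex_iff.2 (by omega)⟩), ?_, rfl⟩
      exact Or.inl ⟨rfl, Or.inl ⟨rfl, show y ≠ 0 by omega⟩, hL.le x hp.1 hp.2.1⟩
    · refine ⟨s(⟨(0, x), hL.isModelVertex_iff.2 (by omega)⟩,
        ⟨(y, x), hL.isModelVertex_iff.2 (by omega)⟩), ?_, rfl⟩
      exact Or.inr ⟨rfl, Or.inl ⟨rfl, show y ≠ 0 by omega⟩, hL.le x hp.1 hp.2.1⟩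

theorem card_edgeSet (hL : LastShort k r L) :
    Nat.card (modelGraph k r L).edgeSet = 2 * (k - 1) ^ 2 := by
  calc Nat.card (modelGraph k r L).edgeSet
      = Nat.card (Sym2.map Subtype.val '' (modelGraph k r L).edgeSet) :=
        (Nat.card_image_of_injective (Sym2.map.injective Subtype.val_injective) _).symm
    _ = 2 * (k - 1) ^ 2 := by
        rw [hL.image_edgeSet, Nat.card_coe_set_eq, Set.ncard_coe_finset, card_modelEdgeFinset]

theorem reachable_hubs (hL : LastShort k r L) {x y : ℕ} (hx : 1 ≤ x) (hxk : x < k) (hy : 1 ≤ y)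
    (hyk : y < k) (hxy : x ≠ y) (hx0 : IsModelVertex k r L (x, 0))
    (h0y : IsModelVertex k r L (0, y)) :
    (modelGraph k r L).Reachable ⟨(x, 0), hx0⟩ ⟨(0, y), h0y⟩ := by
  have hleaf : IsModelVertex k r L (x, y) := hL.isModelVertex_iff.2 (by omega)
  have h₁ : (modelGraph k r L).Adj ⟨(x, 0), hx0⟩ ⟨(x, y), hleaf⟩ :=
    Or.inl ⟨rfl, Or.inl ⟨rfl, show y ≠ 0 by omega⟩, hL.le x hx hxk⟩
  have h₂ : (modelGraph k r L).Adj ⟨(0, y), h0y⟩ ⟨(x, y), hleaf⟩ :=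
    Or.inr ⟨rfl, Or.inl ⟨rfl, show x ≠ 0 by omega⟩, hL.le y hy hyk⟩
  exact h₁.reachable.trans h₂.reachable.symm

theorem modelGraph_connected (hL : LastShort k r L) (hk : 4 ≤ k) :
    (modelGraph k r L).Connected := by
  let base : ModelVertex k r L := ⟨(1, 0), hL.isModelVertex_iff.2 (by omega)⟩
  have fst_hub : ∀ x (hx0 : IsModelVertex k r L (x, 0)), 1 ≤ x → x < k →
      (modelGraph k r L).Reachable base ⟨(x, 0), hx0⟩ := by
    intro x hx0 hx hxk
    obtain ⟨y, hy, hyk, hy1, hyx⟩ : ∃ y, 1 ≤ y ∧ y < k ∧ y ≠ 1 ∧ y ≠ x :=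
      ⟨if x = 2 then 3 else 2, by split_ifs <;> omega⟩
    have h0y : IsModelVertex k r L (0, y) := hL.isModelVertex_iff.2 (by omega)
    exact (hL.reachable_hubs le_rfl (by omega) hy hyk hy1.symm _ h0y).trans
      (hL.reachable_hubs hx hxk hy hyk hyx.symm hx0 h0y).symm
  have snd_hub : ∀ y (h0y : IsModelVertex k r L (0, y)), 1 ≤ y → y < k →
      (modelGraph k r L).Reachable base ⟨(0, y), h0y⟩ := by
    intro y h0y hy hyk
    obtain ⟨x, hx, hxk, hxy⟩ : ∃ x, 1 ≤ x ∧ x < k ∧ x ≠ y :=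
      ⟨if y = 1 then 2 else 1, by split_ifs <;> omega⟩
    have hx0 : IsModelVertex k r L (x, 0) := hL.isModelVertex_iff.2 (by omega)
    exact (fst_hub x hx0 hx hxk).trans (hL.reachable_hubs hx hxk hy hyk hxy hx0 h0y)
  refine (SimpleGraph.connected_iff_exists_forall_reachable _).2 ⟨base, ?_⟩
  rintro ⟨⟨x, y⟩, hv⟩
  have hxy := hL.isModelVertex_iff.1 hv
  rcases (by omega : (y = 0 ∧ 1 ≤ x ∧ x < k) ∨ (x = 0 ∧ 1 ≤ y ∧ y < k) ∨
      (1 ≤ x ∧ x < k ∧ y ≠ 0) ∨ (x ≠ 0 ∧ 1 ≤ y ∧ y < k)) with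
    ⟨rfl, hx, hxk⟩ | ⟨rfl, hy, hyk⟩ | ⟨hx, hxk, hy⟩ | ⟨hx, hy, hyk⟩
  · exact fst_hub x hv hx hxk
  · exact snd_hub y hv hy hyk
  · have hx0 : IsModelVertex k r L (x, 0) := hL.isModelVertex_iff.2 (by omega)
    exact (fst_hub x hx0 hx hxk).trans
      (SimpleGraph.Adj.reachable (Or.inl ⟨rfl, Or.inl ⟨rfl, hy⟩, hL.le x hx hxk⟩))
  · have h0y : IsModelVertex k r L (0, y) := hL.isModelVertex_iff.2 (by omega)
    exact (snd_hub y h0y hy hyk).trans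
      (SimpleGraph.Adj.reachable (Or.inr ⟨rfl, Or.inl ⟨rfl, hx⟩, hL.le y hy hyk⟩))

end LastShort

theorem SimpleGraph.Connected.card_connectedComponent {V : Type*} {G : SimpleGraph V}
    (h : G.Connected) : Nat.card G.ConnectedComponent = 1 :=
  Nat.card_eq_one_iff_unique.2
    ⟨h.preconnected.subsingleton_connectedComponent, h.nonempty.map G.connectedComponentMk⟩

theorem model_counts_Lk_big_general (k : ℕ) (hk : 4 ≤ k) (r : ℝ) (L : ℕ → ℝ)
    (hL0 : L 0 = 0) (hLpos : ∀ i, 1 ≤ i → i ≤ k → 0 < L i)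
    (hL1 : r ≤ L 1) (hLk : L k < r) (hrL : ∀ i, 2 ≤ i → i ≤ k - 1 → r ≤ L i) :
    Nat.card (ModelVertex k r L) = k ^ 2 + k - 2 ∧
    Nat.card (modelGraph k r L).edgeSet = 2 * (k - 1) ^ 2 ∧
    (modelGraph k r L).Connected ∧
    (Nat.card (modelGraph k r L).edgeSet : ℤ) - (Nat.card (ModelVertex k r L) : ℤ)
      + (Nat.card (modelGraph k r L).ConnectedComponent : ℤ)
      = (k : ℤ) ^ 2 - 5 * (k : ℤ) + 5 := by
  have hL : LastShort k r L :=
    { zero := hL0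
      nonneg := fun i hi => (Nat.eq_zero_or_pos i).elim (fun h => h ▸ hL0.ge)
        fun h => (hLpos i h hi).le
      lt := hLk
      le := fun i hi hik => (eq_or_ne i 1).elim (fun h => h ▸ hL1)
        fun h => hrL i (by omega) (by omega) }
  have hv := hL.card_modelVertex (by omega)
  have he := hL.card_edgeSet
  have hcon := hL.modelGraph_connected hk
  refine ⟨hv, he, hcon, ?_⟩
  rw [hv, he, hcon.card_connectedComponent, Nat.cast_sub (by nlinarith), Nat.cast_mul,
    Nat.cast_pow, Nat.cast_sub (by omega)]
  push_cast
  ring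

/-- if `4 ≤ k`, `r ≤ L 1`, `L k < r` and `r ≤ L i` for all `i ∈ {2,…,k−1}`,
then `(G_k)_{r,L}` has `k² + k − 2` vertices, `2(k−1)²` edges, is connected, and
`e − v + c = k² − 5k + 5`. -/
theorem model_counts_Lk_big (k : ℕ) (hk : 4 ≤ k) (r : ℝ) (hr : 0 < r) (L : ℕ → ℝ)
    (hL0 : L 0 = 0) (hLpos : ∀ i, 1 ≤ i → i ≤ k → 0 < L i)
    (hL1 : r ≤ L 1) (hLk : L k < r) (hrL : ∀ i, 2 ≤ i → i ≤ k - 1 → r ≤ L i) :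
    Nat.card (ModelVertex k r L) = k ^ 2 + k - 2 ∧
    Nat.card (modelGraph k r L).edgeSet = 2 * (k - 1) ^ 2 ∧
    (modelGraph k r L).Connected ∧
    (Nat.card (modelGraph k r L).edgeSet : ℤ) - (Nat.card (ModelVertex k r L) : ℤ)
      + (Nat.card (modelGraph k r L).ConnectedComponent : ℤ)
      = (k : ℤ) ^ 2 - 5 * (k : ℤ) + 5 :=
  model_counts_Lk_big_general k hk r L hL0 hLpos hL1 hLk hrL
end

section
/- Let k ≥ 4 and r > 0 and L_1, …, L_k > 0. Then e(G') − v(G') + c(G') = e(G) − v(G) + c(G), where G = (G_k)_{r,L} is the model graph and G' = (G_k)'_{r,L} is the reduced graph. -/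
/-- A pair is a vertex of the reduced graph `(G_k)'_{r,L}`: either `(x,0)` with
`1 ≤ x ≤ k` and `L x ≥ r`, or `(0,y)` with `1 ≤ y ≤ k` and `L y ≥ r`. -/
def IsReducedVertex (k : ℕ) (r : ℝ) (L : ℕ → ℝ) (p : ℕ × ℕ) : Prop :=
  (p.2 = 0 ∧ 1 ≤ p.1 ∧ p.1 ≤ k ∧ r ≤ L p.1) ∨ (p.1 = 0 ∧ 1 ≤ p.2 ∧ p.2 ≤ k ∧ r ≤ L p.2)

/-- The vertex type of the reduced graph `(G_k)'_{r,L}`. -/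
def ReducedVertex (k : ℕ) (r : ℝ) (L : ℕ → ℝ) : Type :=
  {p : ℕ × ℕ // IsReducedVertex k r L p}

/-- Adjacency in the reduced graph: `(x,0)` and `(0,y)` are adjacent iff `x ≠ y`. -/
def ReducedAdj (a b : ℕ × ℕ) : Prop :=
  (a.2 = 0 ∧ b.1 = 0 ∧ a.1 ≠ b.2) ∨ (a.1 = 0 ∧ b.2 = 0 ∧ b.1 ≠ a.2)

theorem ReducedAdj.symm {a b : ℕ × ℕ} (h : ReducedAdj a b) : ReducedAdj b a := by
  rcases h with ⟨h1, h2, h3⟩ | ⟨h1, h2, h3⟩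
  · exact Or.inr ⟨h2, h1, h3⟩
  · exact Or.inl ⟨h2, h1, h3⟩

theorem ReducedAdj.irrefl {a : ℕ × ℕ} (h : ReducedAdj a a) : False := by
  rcases h with ⟨h1, h2, h3⟩ | ⟨h1, h2, h3⟩ <;> omega

/-- The reduced graph `(G_k)'_{r,L}`. -/
def reducedGraph (k : ℕ) (r : ℝ) (L : ℕ → ℝ) : SimpleGraph (ReducedVertex k r L) where
  Adj a b := ReducedAdj a.val b.val
  symm := ⟨fun _ _ h => h.symm⟩
  loopless := ⟨fun _ h => h.irrefl⟩

/-!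
Call an index `i` long if `L i ≥ r`. A model vertex `(x, y)` with `x, y ≥ 1` is adjacent exactly
to `(x, 0)` when `x` is long and to `(0, y)` when `y` is long, and the other model vertices are
those of the reduced graph. Hence the model graph is the reduced graph with every edge
`(x, 0) — (0, y)` subdivided by `(x, y)`, with a pendant vertex `(x, y)` for each pair with exactly
one long entry and an isolated vertex for each pair with none; none of these operations changes
`e − v + c`.
-/

namespace SimpleGraph

variable {V W β : Type*} {G : SimpleGraph V} {H : SimpleGraph W}

theorem Reachable.map_of_adj {f : V → W} (hf : ∀ ⦃u v⦄, G.Adj u v → H.Reachable (f u) (f v))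
    {u v : V} (h : G.Reachable u v) : H.Reachable (f u) (f v) := by
  obtain ⟨p⟩ := h
  induction p with
  | nil => rfl
  | cons hadj _ ih => exact (hf hadj).trans ih

noncomputable def ConnectedComponent.equivOfFibers (f : V → β)
    (hadj : ∀ ⦃u v⦄, G.Adj u v → f u = f v) (hfib : ∀ ⦃u v⦄, f u = f v → G.Reachable u v)
    (hf : Function.Surjective f) : G.ConnectedComponent ≃ β := by
  have hreach : ∀ ⦃u v⦄, G.Reachable u v → f u = f v := fun _ _ h =>
    reachable_bot.mp (h.map_of_adj fun _ _ huv => reachable_bot.mpr (hadj huv))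
  refine Equiv.ofBijective (ConnectedComponent.lift f fun _ _ p _ => hreach p.reachable)
    ⟨fun c d => ?_, fun b => ?_⟩
  · induction c using ConnectedComponent.ind
    induction d using ConnectedComponent.ind
    exact fun h => ConnectedComponent.sound (hfib h)
  · obtain ⟨v, rfl⟩ := hf b
    exact ⟨G.connectedComponentMk v, rfl⟩

noncomputable def IsBipartiteWith.edgeSetEquiv {A B : Set V} (h : G.IsBipartiteWith A B) :
    {e : V × V // e.1 ∈ A ∧ G.Adj e.1 e.2} ≃ G.edgeSet := by
  refine Equiv.ofBijective (fun e => ⟨s(e.1.1, e.1.2), e.2.2⟩) ⟨?_, ?_⟩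
  · rintro ⟨⟨a, b⟩, ha, hab⟩ ⟨⟨c, d⟩, hc, _⟩ hst
    rcases Sym2.eq_iff.mp (congrArg Subtype.val hst) with ⟨rfl, rfl⟩ | ⟨rfl, rfl⟩
    · rfl
    · rcases h.mem_of_adj hab with ⟨-, hb⟩ | ⟨ha', -⟩
      · exact absurd hb (Set.disjoint_left.mp h.disjoint hc)
      · exact absurd ha' (Set.disjoint_left.mp h.disjoint ha)
  · rintro ⟨e, he⟩
    induction e using Sym2.ind with
    | _ a b =>
      rcases h.mem_of_adj he with ⟨ha, -⟩ | ⟨-, hb⟩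
      · exact ⟨⟨(a, b), ha, he⟩, rfl⟩
      · exact ⟨⟨(b, a), hb, he.symm⟩, Subtype.ext Sym2.eq_swap⟩

end SimpleGraph

theorem Nat.card_subtype_prod_subtype {α : Type*} (P : α → Prop) (R : α → α → Prop) :
    Nat.card {e : Subtype P × Subtype P // R e.1 e.2} =
      Nat.card {e : α × α // P e.1 ∧ P e.2 ∧ R e.1 e.2} :=
  Nat.card_congr
    { toFun := fun e => ⟨(e.1.1, e.1.2), e.1.1.2, e.1.2.2, e.2⟩
      invFun := fun e => ⟨(⟨e.1.1, e.2.1⟩, ⟨e.1.2, e.2.2.1⟩), e.2.2.2⟩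
      left_inv := fun _ => rfl
      right_inv := fun _ => rfl }

open Finset

section ModelGraph

variable {k : ℕ} {r : ℝ} {L : ℕ → ℝ}

open scoped Classical in
noncomputable def longIndices (k : ℕ) (r : ℝ) (L : ℕ → ℝ) : Finset ℕ :=
  (Icc 1 k).filter fun x => r ≤ L x

open scoped Classical in
noncomputable def innerVertices (k : ℕ) (r : ℝ) (L : ℕ → ℝ) : Finset (ℕ × ℕ) :=
  (Icc 1 k).offDiag.filter fun p => r ≤ L p.1 + L p.2

open scoped Classical in
noncomputable def fstLongPairs (k : ℕ) (r : ℝ) (L : ℕ → ℝ) : Finset (ℕ × ℕ) :=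
  (Icc 1 k).offDiag.filter fun p => p.1 ∈ longIndices k r L

open scoped Classical in
noncomputable def sndLongPairs (k : ℕ) (r : ℝ) (L : ℕ → ℝ) : Finset (ℕ × ℕ) :=
  (Icc 1 k).offDiag.filter fun p => p.2 ∈ longIndices k r L

def HasLongEntry (k : ℕ) (r : ℝ) (L : ℕ → ℝ) (p : ℕ × ℕ) : Prop :=
  p.1 ∈ longIndices k r L ∨ p.2 ∈ longIndices k r L

open scoped Classical in
noncomputable def isolatedVertices (k : ℕ) (r : ℝ) (L : ℕ → ℝ) : Finset (ℕ × ℕ) :=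
  (innerVertices k r L).filter fun p => ¬HasLongEntry k r L p

@[simp]
theorem mem_longIndices {x : ℕ} : x ∈ longIndices k r L ↔ 1 ≤ x ∧ x ≤ k ∧ r ≤ L x := by
  simp [longIndices, and_assoc]

@[simp]
theorem mem_innerVertices {p : ℕ × ℕ} :
    p ∈ innerVertices k r L ↔
      (1 ≤ p.1 ∧ p.1 ≤ k) ∧ (1 ≤ p.2 ∧ p.2 ≤ k) ∧ p.1 ≠ p.2 ∧ r ≤ L p.1 + L p.2 := by
  simp [innerVertices, and_assoc]

@[simp]
theorem mem_fstLongPairs {p : ℕ × ℕ} :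
    p ∈ fstLongPairs k r L ↔ (1 ≤ p.2 ∧ p.2 ≤ k) ∧ p.1 ≠ p.2 ∧ p.1 ∈ longIndices k r L := by
  simp only [fstLongPairs, mem_filter, mem_offDiag, mem_Icc, mem_longIndices]
  tauto

@[simp]
theorem mem_sndLongPairs {p : ℕ × ℕ} :
    p ∈ sndLongPairs k r L ↔ (1 ≤ p.1 ∧ p.1 ≤ k) ∧ p.1 ≠ p.2 ∧ p.2 ∈ longIndices k r L := by
  simp only [sndLongPairs, mem_filter, mem_offDiag, mem_Icc, mem_longIndices]
  tauto

theorem offDiag_longIndices :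
    (longIndices k r L).offDiag = fstLongPairs k r L ∩ sndLongPairs k r L := by
  ext p
  simp only [mem_offDiag, mem_inter, mem_fstLongPairs, mem_sndLongPairs, mem_longIndices]
  tauto

open scoped Classical in
theorem filter_hasLongEntry_innerVertices (hL : ∀ i, 1 ≤ i → i ≤ k → 0 ≤ L i) :
    (innerVertices k r L).filter (HasLongEntry k r L) =
      fstLongPairs k r L ∪ sndLongPairs k r L := by
  ext p
  simp only [mem_filter, mem_union, mem_innerVertices, mem_fstLongPairs, mem_sndLongPairs,
    HasLongEntry, mem_longIndices]
  constructor
  · rintro ⟨⟨h1, h2, h3, -⟩, h | h⟩ <;> tauto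
  · rintro (⟨h2, h3, h1⟩ | ⟨h1, h3, h2⟩)
    · exact ⟨⟨⟨by omega, h1.2.1⟩, h2, h3, by linarith [hL p.2 h2.1 h2.2, h1.2.2]⟩, .inl h1⟩
    · exact ⟨⟨h1, ⟨by omega, h2.2.1⟩, h3, by linarith [hL p.1 h1.1 h1.2, h2.2.2]⟩, .inr h2⟩

theorem card_innerVertices (hL : ∀ i, 1 ≤ i → i ≤ k → 0 ≤ L i) :
    #(innerVertices k r L) =
      #(isolatedVertices k r L) + #(fstLongPairs k r L ∪ sndLongPairs k r L) := by
  classical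
  rw [← filter_hasLongEntry_innerVertices hL, isolatedVertices, add_comm]
  exact (card_filter_add_card_filter_not _).symm

theorem isModelVertex_iff_s8 (hL0 : L 0 = 0) {p : ℕ × ℕ} :
    IsModelVertex k r L p ↔ IsReducedVertex k r L p ∨ p ∈ innerVertices k r L := by
  obtain ⟨x, y⟩ := p
  simp only [IsModelVertex, IsReducedVertex, mem_innerVertices]
  constructor
  · rintro ⟨hx, hy, hxy, hL⟩
    rcases Nat.eq_zero_or_pos y with rfl | hy0
    · rw [hL0, add_zero] at hL
      exact .inl (.inl ⟨rfl, by omega, hx, hL⟩)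
    rcases Nat.eq_zero_or_pos x with rfl | hx0
    · rw [hL0, zero_add] at hL
      exact .inl (.inr ⟨rfl, hy0, hy, hL⟩)
    exact .inr ⟨⟨hx0, hx⟩, ⟨hy0, hy⟩, hxy, hL⟩
  · rintro ((⟨rfl, hx0, hx, hL⟩ | ⟨rfl, hy0, hy, hL⟩) | ⟨⟨-, hx⟩, ⟨-, hy⟩, hxy, hL⟩)
    · exact ⟨hx, Nat.zero_le _, by omega, by simpa [hL0] using hL⟩
    · exact ⟨Nat.zero_le _, hy, by omega, by simpa [hL0] using hL⟩
    · exact ⟨hx, hy, hxy, hL⟩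

instance : Finite (ReducedVertex k r L) :=
  Set.Finite.to_subtype (s := {p | IsReducedVertex k r L p}) <|
    (range (k + 1) ×ˢ range (k + 1)).finite_toSet.subset fun p hp => by
      simp only [coe_product, coe_range, Set.mem_prod, Set.mem_Iio]
      rcases hp with ⟨h0, -, hx, -⟩ | ⟨h0, -, hy, -⟩ <;> omega

theorem card_modelVertex_s8 (hL0 : L 0 = 0) :
    Nat.card (ModelVertex k r L) = Nat.card (ReducedVertex k r L) + #(innerVertices k r L) := by
  classical
  have hdisj : Disjoint (IsReducedVertex k r L) (· ∈ innerVertices k r L) := by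
    simp only [Pi.disjoint_iff, Prop.disjoint_iff, mem_innerVertices]
    rintro p ⟨⟨h0, -⟩ | ⟨h0, -⟩, ⟨h1, -⟩, ⟨h2, -⟩, -⟩ <;> omega
  rw [← Nat.card_eq_finsetCard, ← Nat.card_sum]
  exact Nat.card_congr ((Equiv.subtypeEquivRight fun p => isModelVertex_iff_s8 hL0).trans
    (subtypeOrEquiv _ _ hdisj))

theorem isBipartiteWith_modelGraph :
    (modelGraph k r L).IsBipartiteWith {v | v.1.1 ≠ 0 ∧ v.1.2 ≠ 0}
      {v | v.1.1 ≠ 0 ∧ v.1.2 ≠ 0}ᶜ where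
  disjoint := disjoint_compl_right
  mem_of_adj u v h := by
    obtain ⟨-, -, hu, -⟩ := u.2
    obtain ⟨-, -, hv, -⟩ := v.2
    simp only [Set.mem_ofPred_eq, Set.mem_compl_iff]
    rcases h with ⟨h1, h2, -⟩ | ⟨h1, h2, -⟩ <;> omega

theorem modelAdj_of_ne_zero_iff (hL0 : L 0 = 0) (hL : ∀ i, 1 ≤ i → i ≤ k → 0 ≤ L i)
    {p q : ℕ × ℕ} :
    (IsModelVertex k r L p ∧ IsModelVertex k r L q ∧ (p.1 ≠ 0 ∧ p.2 ≠ 0) ∧ ModelAdj r L p q) ↔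
      (p ∈ fstLongPairs k r L ∧ q = (p.1, 0)) ∨ (p ∈ sndLongPairs k r L ∧ q = (0, p.2)) := by
  obtain ⟨x, y⟩ := p
  obtain ⟨x', y'⟩ := q
  simp only [IsModelVertex, ModelAdj, mem_fstLongPairs, mem_sndLongPairs, mem_longIndices,
    Prod.mk.injEq]
  constructor
  · rintro ⟨⟨hx, hy, hxy, -⟩, -, ⟨hx0, hy0⟩, ⟨rfl, h2, hLx⟩ | ⟨rfl, h2, hLy⟩⟩
    · exact .inl ⟨⟨⟨by omega, hy⟩, hxy, by omega, hx, hLx⟩, rfl, by omega⟩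
    · exact .inr ⟨⟨⟨by omega, hx⟩, hxy, by omega, hy, hLy⟩, by omega, rfl⟩
  · rintro (⟨⟨⟨hy1, hy⟩, hxy, hx1, hx, hLx⟩, rfl, rfl⟩ |
      ⟨⟨⟨hx1, hx⟩, hxy, hy1, hy, hLy⟩, rfl, rfl⟩)
    · exact ⟨⟨hx, hy, hxy, by linarith [hL y hy1 hy]⟩,
        ⟨hx, Nat.zero_le _, by omega, by rwa [hL0, add_zero]⟩, ⟨by omega, by omega⟩,
        .inl ⟨rfl, by omega, hLx⟩⟩
    · exact ⟨⟨hx, hy, hxy, by linarith [hL x hx1 hx]⟩,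
        ⟨Nat.zero_le _, hy, by omega, by rwa [hL0, zero_add]⟩, ⟨by omega, by omega⟩,
        .inr ⟨rfl, by omega, hLy⟩⟩

theorem card_edgeSet_modelGraph_s8 (hL0 : L 0 = 0) (hL : ∀ i, 1 ≤ i → i ≤ k → 0 ≤ L i) :
    Nat.card (modelGraph k r L).edgeSet = #(fstLongPairs k r L) + #(sndLongPairs k r L) := by
  classical
  set E₁ := (fstLongPairs k r L).image fun p => (p, (p.1, 0))
  set E₂ := (sndLongPairs k r L).image fun p => (p, (0, p.2))
  have hE : ∀ e : (ℕ × ℕ) × (ℕ × ℕ), (IsModelVertex k r L e.1 ∧ IsModelVertex k r L e.2 ∧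
      (e.1.1 ≠ 0 ∧ e.1.2 ≠ 0) ∧ ModelAdj r L e.1 e.2) ↔ e ∈ E₁ ∪ E₂ := by
    rintro ⟨p, q⟩
    rw [modelAdj_of_ne_zero_iff hL0 hL]
    simp only [E₁, E₂, mem_union, mem_image, Prod.mk.injEq]
    constructor
    · rintro (⟨h, rfl⟩ | ⟨h, rfl⟩)
      exacts [.inl ⟨p, h, rfl, rfl⟩, .inr ⟨p, h, rfl, rfl⟩]
    · rintro (⟨a, h, rfl, rfl⟩ | ⟨a, h, rfl, rfl⟩)
      exacts [.inl ⟨h, rfl⟩, .inr ⟨h, rfl⟩]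
  have hdisj : Disjoint E₁ E₂ := by
    simp only [E₁, E₂, disjoint_left, mem_image]
    rintro _ ⟨a, ha, rfl⟩ ⟨b, -, hba⟩
    have h0 : 0 = a.1 := congrArg (fun e => e.2.1) hba
    have h1 := (mem_longIndices.mp (mem_fstLongPairs.mp ha).2.2).1
    omega
  calc Nat.card (modelGraph k r L).edgeSet
      = Nat.card {e : ModelVertex k r L × ModelVertex k r L //
          e.1 ∈ {v : ModelVertex k r L | v.1.1 ≠ 0 ∧ v.1.2 ≠ 0} ∧
            (modelGraph k r L).Adj e.1 e.2} :=
        (Nat.card_congr isBipartiteWith_modelGraph.edgeSetEquiv).symm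
    _ = Nat.card {e : (ℕ × ℕ) × (ℕ × ℕ) // IsModelVertex k r L e.1 ∧ IsModelVertex k r L e.2 ∧
          (e.1.1 ≠ 0 ∧ e.1.2 ≠ 0) ∧ ModelAdj r L e.1 e.2} :=
        Nat.card_subtype_prod_subtype _ fun (p q : ℕ × ℕ) => (p.1 ≠ 0 ∧ p.2 ≠ 0) ∧ ModelAdj r L p q
    _ = #(E₁ ∪ E₂) :=
      (Nat.card_congr (Equiv.subtypeEquivRight hE)).trans (Nat.card_eq_finsetCard _)
    _ = #(fstLongPairs k r L) + #(sndLongPairs k r L) := by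
      rw [card_union_of_disjoint hdisj, card_image_of_injective _ fun _ _ h => congrArg Prod.fst h,
        card_image_of_injective _ fun _ _ h => congrArg Prod.fst h]

theorem isBipartiteWith_reducedGraph :
    (reducedGraph k r L).IsBipartiteWith {a | a.1.2 = 0} {a | a.1.2 = 0}ᶜ where
  disjoint := disjoint_compl_right
  mem_of_adj a b h := by
    have ha : a.1.1 ≠ 0 ∨ a.1.2 ≠ 0 := by rcases a.2 with ⟨-, h1, -⟩ | ⟨-, h1, -⟩ <;> omega
    have hb : b.1.1 ≠ 0 ∨ b.1.2 ≠ 0 := by rcases b.2 with ⟨-, h1, -⟩ | ⟨-, h1, -⟩ <;> omega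
    simp only [Set.mem_ofPred_eq, Set.mem_compl_iff]
    rcases h with ⟨h1, h2, -⟩ | ⟨h1, h2, -⟩ <;> omega

theorem reducedAdj_of_snd_eq_zero_iff {p q : ℕ × ℕ} :
    (IsReducedVertex k r L p ∧ IsReducedVertex k r L q ∧ p.2 = 0 ∧ ReducedAdj p q) ↔
      (p.1, q.2) ∈ (longIndices k r L).offDiag ∧ p.2 = 0 ∧ q.1 = 0 := by
  obtain ⟨x, y⟩ := p
  obtain ⟨x', y'⟩ := q
  simp only [IsReducedVertex, ReducedAdj, mem_offDiag, mem_longIndices]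
  grind

theorem card_edgeSet_reducedGraph :
    Nat.card (reducedGraph k r L).edgeSet = #(longIndices k r L).offDiag := by
  classical
  set E := (longIndices k r L).offDiag.image fun a => ((a.1, 0), (0, a.2))
  have hE : ∀ e : (ℕ × ℕ) × (ℕ × ℕ), (IsReducedVertex k r L e.1 ∧ IsReducedVertex k r L e.2 ∧
      e.1.2 = 0 ∧ ReducedAdj e.1 e.2) ↔ e ∈ E := by
    rintro ⟨⟨x, y⟩, ⟨x', y'⟩⟩
    rw [reducedAdj_of_snd_eq_zero_iff]
    simp only [E, mem_image, Prod.mk.injEq]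
    constructor
    · rintro ⟨h, rfl, rfl⟩
      exact ⟨_, h, ⟨rfl, rfl⟩, rfl, rfl⟩
    · rintro ⟨a, h, ⟨rfl, rfl⟩, rfl, rfl⟩
      exact ⟨h, rfl, rfl⟩
  calc Nat.card (reducedGraph k r L).edgeSet
      = Nat.card {e : ReducedVertex k r L × ReducedVertex k r L //
          e.1 ∈ {a : ReducedVertex k r L | a.1.2 = 0} ∧ (reducedGraph k r L).Adj e.1 e.2} :=
        (Nat.card_congr isBipartiteWith_reducedGraph.edgeSetEquiv).symm
    _ = Nat.card {e : (ℕ × ℕ) × (ℕ × ℕ) // IsReducedVertex k r L e.1 ∧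
          IsReducedVertex k r L e.2 ∧ e.1.2 = 0 ∧ ReducedAdj e.1 e.2} :=
        Nat.card_subtype_prod_subtype _ (fun (p q : ℕ × ℕ) => p.2 = 0 ∧ ReducedAdj p q)
    _ = #E := (Nat.card_congr (Equiv.subtypeEquivRight hE)).trans (Nat.card_eq_finsetCard E)
    _ = #(longIndices k r L).offDiag :=
      card_image_of_injective _ fun a b h => by
        simp only [Prod.mk.injEq] at h
        exact Prod.ext h.1.1 h.2.2

instance : Finite (ModelVertex k r L) :=
  Set.Finite.to_subtype (s := {p | IsModelVertex k r L p}) <|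
    (range (k + 1) ×ˢ range (k + 1)).finite_toSet.subset fun p ⟨hx, hy, _⟩ => by
      simp only [coe_product, coe_range, Set.mem_prod, Set.mem_Iio]
      omega

open scoped Classical in
noncomputable def hub (k : ℕ) (r : ℝ) (L : ℕ → ℝ) (p : ℕ × ℕ) : ℕ × ℕ :=
  if p.1 ∈ longIndices k r L then (p.1, 0) else (0, p.2)

theorem isReducedVertex_hub {p : ℕ × ℕ} (h : HasLongEntry k r L p) :
    IsReducedVertex k r L (hub k r L p) := by
  unfold hub
  split_ifs with h1
  · exact .inl ⟨rfl, mem_longIndices.mp h1⟩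
  · exact .inr ⟨rfl, mem_longIndices.mp (h.resolve_left h1)⟩

theorem hub_eq_self {p : ℕ × ℕ} (h : IsReducedVertex k r L p) : hub k r L p = p := by
  unfold hub
  split_ifs with h1 <;> simp only [mem_longIndices] at h1 <;> grind [IsReducedVertex]

theorem IsReducedVertex.hasLongEntry {p : ℕ × ℕ} (h : IsReducedVertex k r L p) :
    HasLongEntry k r L p := by
  rcases h with ⟨-, hx⟩ | ⟨-, hy⟩
  exacts [.inl (mem_longIndices.mpr hx), .inr (mem_longIndices.mpr hy)]

theorem ModelAdj.hasLongEntry {p q : ℕ × ℕ} (hp : IsModelVertex k r L p)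
    (hq : IsModelVertex k r L q) (h : ModelAdj r L p q) : HasLongEntry k r L p := by
  obtain ⟨hx, hy, hxy, -⟩ := hp
  obtain ⟨-, -, hxy', -⟩ := hq
  rcases h with ⟨h1, h2, hL⟩ | ⟨h1, h2, hL⟩
  · exact .inl (mem_longIndices.mpr ⟨by omega, hx, hL⟩)
  · exact .inr (mem_longIndices.mpr ⟨by omega, hy, hL⟩)

theorem hub_eq_or_modelAdj {p : ℕ × ℕ} (hp : IsModelVertex k r L p) (h : HasLongEntry k r L p) :
    hub k r L p = p ∨ ModelAdj r L p (hub k r L p) := by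
  unfold hub HasLongEntry at *
  simp only [mem_longIndices, IsModelVertex, ModelAdj] at *
  split_ifs <;> grind

theorem hub_eq_or_reducedAdj {p q : ℕ × ℕ} (hp : IsModelVertex k r L p)
    (hq : IsModelVertex k r L q) (h : ModelAdj r L p q) :
    hub k r L p = hub k r L q ∨ ReducedAdj (hub k r L p) (hub k r L q) := by
  unfold hub
  simp only [mem_longIndices, IsModelVertex, ModelAdj, ReducedAdj] at *
  split_ifs <;> grind

def reducedToModel (hL0 : L 0 = 0) (a : ReducedVertex k r L) : ModelVertex k r L :=
  ⟨a.1, (isModelVertex_iff_s8 hL0).mpr (.inl a.2)⟩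

/-- A reduced edge `(x,0) — (0,y)` is subdivided in the model graph by the vertex `(x,y)`. -/
theorem reachable_reducedToModel_of_adj (hL0 : L 0 = 0) (hL : ∀ i, 1 ≤ i → i ≤ k → 0 ≤ L i)
    {a b : ReducedVertex k r L} (h : (reducedGraph k r L).Adj a b) :
    (modelGraph k r L).Reachable (reducedToModel hL0 a) (reducedToModel hL0 b) := by
  suffices key : ∀ a b : ReducedVertex k r L, a.1.2 = 0 → b.1.1 = 0 → a.1.1 ≠ b.1.2 →
      (modelGraph k r L).Reachable (reducedToModel hL0 a) (reducedToModel hL0 b) by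
    rcases h with ⟨h1, h2, h3⟩ | ⟨h1, h2, h3⟩
    exacts [key a b h1 h2 h3, (key b a h2 h1 h3).symm]
  intro a b ha hb hab
  obtain ⟨hx1, hx, hLx⟩ : 1 ≤ a.1.1 ∧ a.1.1 ≤ k ∧ r ≤ L a.1.1 := by
    rcases a.2 with ⟨-, h⟩ | ⟨h0, h, -⟩
    exacts [h, by omega]
  obtain ⟨hy1, hy, hLy⟩ : 1 ≤ b.1.2 ∧ b.1.2 ≤ k ∧ r ≤ L b.1.2 := by
    rcases b.2 with ⟨h0, h, -⟩ | ⟨-, h⟩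
    exacts [by omega, h]
  let mid : ModelVertex k r L := ⟨(a.1.1, b.1.2), hx, hy, hab, by linarith [hL _ hy1 hy]⟩
  have h1 : (modelGraph k r L).Adj (reducedToModel hL0 a) mid :=
    .inl ⟨rfl, .inl ⟨ha, Nat.one_le_iff_ne_zero.mp hy1⟩, hLx⟩
  have h2 : (modelGraph k r L).Adj mid (reducedToModel hL0 b) :=
    .inr ⟨rfl, .inr ⟨Nat.one_le_iff_ne_zero.mp hx1, hb⟩, hLy⟩
  exact h1.reachable.trans h2.reachable

theorem reachable_reducedToModel_hub (hL0 : L 0 = 0) (u : ModelVertex k r L)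
    (h : HasLongEntry k r L u.1) :
    (modelGraph k r L).Reachable u (reducedToModel hL0 ⟨hub k r L u.1, isReducedVertex_hub h⟩) := by
  rcases hub_eq_or_modelAdj u.2 h with e | e
  · rw [show reducedToModel hL0 ⟨hub k r L u.1, isReducedVertex_hub h⟩ = u from Subtype.ext e]
  · exact SimpleGraph.Adj.reachable e

open scoped Classical in
/-- Model vertices without a long entry are isolated, so they are their own components. -/
noncomputable def hubComponent (v : ModelVertex k r L) :
    (reducedGraph k r L).ConnectedComponent ⊕ {v : ModelVertex k r L // ¬HasLongEntry k r L v.1} :=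
  if h : HasLongEntry k r L v.1 then
    .inl ((reducedGraph k r L).connectedComponentMk ⟨hub k r L v.1, isReducedVertex_hub h⟩)
  else .inr ⟨v, h⟩

theorem hubComponent_eq_of_adj {u v : ModelVertex k r L} (h : (modelGraph k r L).Adj u v) :
    hubComponent u = hubComponent v := by
  rw [hubComponent, hubComponent, dif_pos (h.hasLongEntry u.2 v.2),
    dif_pos (ModelAdj.hasLongEntry v.2 u.2 h.symm)]
  rcases hub_eq_or_reducedAdj u.2 v.2 h with e | e
  · exact congrArg _ (congrArg _ (Subtype.ext e))
  · exact congrArg _ (SimpleGraph.ConnectedComponent.connectedComponentMk_eq_of_adj e)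

theorem reachable_of_hubComponent_eq (hL0 : L 0 = 0) (hL : ∀ i, 1 ≤ i → i ≤ k → 0 ≤ L i)
    {u v : ModelVertex k r L} (h : hubComponent u = hubComponent v) :
    (modelGraph k r L).Reachable u v := by
  unfold hubComponent at h
  split_ifs at h with hu hv hv
  · have hred := SimpleGraph.ConnectedComponent.exact (Sum.inl.inj h)
    exact (reachable_reducedToModel_hub hL0 u hu).trans
      ((hred.map_of_adj fun _ _ => reachable_reducedToModel_of_adj hL0 hL).trans
        (reachable_reducedToModel_hub hL0 v hv).symm)
  · obtain rfl : u = v := congrArg Subtype.val (Sum.inr.inj h)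
    rfl

theorem hubComponent_surjective (hL0 : L 0 = 0) :
    Function.Surjective (hubComponent (k := k) (r := r) (L := L)) := by
  rintro (c | ⟨v, hv⟩)
  · induction c using SimpleGraph.ConnectedComponent.ind with
    | h a =>
      refine ⟨reducedToModel hL0 a, ?_⟩
      rw [hubComponent, dif_pos (show HasLongEntry k r L (reducedToModel hL0 a).1 from
        a.2.hasLongEntry)]
      exact congrArg _ (congrArg _ (Subtype.ext (hub_eq_self a.2)))
  · exact ⟨v, dif_neg hv⟩

theorem card_not_hasLongEntry (hL0 : L 0 = 0) :
    Nat.card {v : ModelVertex k r L // ¬HasLongEntry k r L v.1} = #(isolatedVertices k r L) := by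
  classical
  have h : ∀ p, (IsModelVertex k r L p ∧ ¬HasLongEntry k r L p) ↔ p ∈ isolatedVertices k r L := by
    intro p
    rw [isModelVertex_iff_s8 hL0, isolatedVertices, mem_filter]
    constructor
    · rintro ⟨h | h, hp⟩
      exacts [absurd h.hasLongEntry hp, ⟨h, hp⟩]
    · exact fun ⟨h, hp⟩ => ⟨.inr h, hp⟩
  exact (Nat.card_congr ((Equiv.subtypeSubtypeEquivSubtypeInter _ _).trans
    (Equiv.subtypeEquivRight h))).trans (Nat.card_eq_finsetCard _)

theorem card_connectedComponent_modelGraph (hL0 : L 0 = 0)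
    (hL : ∀ i, 1 ≤ i → i ≤ k → 0 ≤ L i) :
    Nat.card (modelGraph k r L).ConnectedComponent =
      Nat.card (reducedGraph k r L).ConnectedComponent + #(isolatedVertices k r L) := by
  rw [Nat.card_congr (SimpleGraph.ConnectedComponent.equivOfFibers hubComponent
    (fun _ _ => hubComponent_eq_of_adj) (fun _ _ => reachable_of_hubComponent_eq hL0 hL)
    (hubComponent_surjective hL0)), Nat.card_sum, card_not_hasLongEntry hL0]

end ModelGraph

theorem reduced_euler_eq_model_euler_general (k : ℕ) (r : ℝ)
    (L : ℕ → ℝ) (hL0 : L 0 = 0) (hLpos : ∀ i, 1 ≤ i → i ≤ k → 0 < L i) :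
    (Nat.card (reducedGraph k r L).edgeSet : ℤ) - (Nat.card (ReducedVertex k r L) : ℤ)
      + (Nat.card (reducedGraph k r L).ConnectedComponent : ℤ)
    = (Nat.card (modelGraph k r L).edgeSet : ℤ) - (Nat.card (ModelVertex k r L) : ℤ)
      + (Nat.card (modelGraph k r L).ConnectedComponent : ℤ) := by
  have hL : ∀ i, 1 ≤ i → i ≤ k → 0 ≤ L i := fun i h1 h2 => (hLpos i h1 h2).le
  have hunion := card_union_add_card_inter (fstLongPairs k r L) (sndLongPairs k r L)
  rw [card_edgeSet_reducedGraph, offDiag_longIndices, card_edgeSet_modelGraph_s8 hL0 hL,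
    card_modelVertex_s8 hL0, card_connectedComponent_modelGraph hL0 hL, card_innerVertices hL]
  push_cast
  omega

/-- the reduced graph and the model graph have the same Euler characteristic
`e − v + c`. -/
theorem reduced_euler_eq_model_euler (k : ℕ) (hk : 4 ≤ k) (r : ℝ) (hr : 0 < r)
    (L : ℕ → ℝ) (hL0 : L 0 = 0) (hLpos : ∀ i, 1 ≤ i → i ≤ k → 0 < L i) :
    (Nat.card (reducedGraph k r L).edgeSet : ℤ) - (Nat.card (ReducedVertex k r L) : ℤ)
      + (Nat.card (reducedGraph k r L).ConnectedComponent : ℤ)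
    = (Nat.card (modelGraph k r L).edgeSet : ℤ) - (Nat.card (ModelVertex k r L) : ℤ)
      + (Nat.card (modelGraph k r L).ConnectedComponent : ℤ) :=
  reduced_euler_eq_model_euler_general k r L hL0 hLpos
end
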